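/- Let m ≥ 2, let d_1,…,d_m ≥ 1, let R = [d_1]×⋯×[d_m], and let M = {p ∈ Δ_R : p_x = ∏_{i=1}^m θ_i(x_i) for some probability vectors θ_i on [d_i]} be the independence model of m discrete random variables. Then sup_{p∈Δ_R} inf_{q∈M} D(p‖q) ≤ (Σ_{i=1}^m log d_i) − log(max_i d_i); equivalently, if d_1 ≤ d_2 ≤ ⋯ ≤ d_m, the maximum divergence from M is at most log d_1 + ⋯ + log d_{m−1}. -/

import Mathlib

open scoped BigOperators Pointwise

attribute [local instance] Classical.propDecidable

def simplex (ι : Type*) [Fintype ι] : Set (ι → ℝ) :=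
  {p | (∀ i, 0 ≤ p i) ∧ ∑ i, p i = 1}

noncomputable def KL {ι : Type*} [Fintype ι] (p q : ι → ℝ) : EReal :=
  if ∀ i, q i = 0 → p i = 0 then (((∑ i, p i * Real.log (p i / q i)) : ℝ) : EReal) else ⊤

noncomputable def divFrom {ι : Type*} [Fintype ι] (M : Set (ι → ℝ)) (p : ι → ℝ) : EReal :=
  ⨅ q ∈ M, KL p q

/-!
Given `p`, pick a coordinate `i₀` of maximal size and let `q` be the product of the `i₀`-marginal
of `p` with the uniform distributions on the other coordinates. Then
`p x ≤ p_{i₀}(x_{i₀}) = N · q x` with `N = ∏_{i ≠ i₀} d_i`, so every log-ratio in `D(p‖q)` is at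
most `log N`, and so is `D(p‖q)`, being a `p`-average of them.
-/

open Finset

section Simplex

variable {ι : Type*} [Fintype ι]

lemma nonempty_of_mem_simplex {p : ι → ℝ} (hp : p ∈ simplex ι) : Nonempty ι := by
  by_contra h
  rw [not_nonempty_iff] at h
  simpa using hp.2

lemma uniform_mem_simplex [Nonempty ι] : (fun _ => (Fintype.card ι : ℝ)⁻¹) ∈ simplex ι :=
  ⟨fun _ => by positivity, by simp⟩

lemma KL_le_log_of_le_mul {p q : ι → ℝ} {c : ℝ} (hp : p ∈ simplex ι) (hc : 0 < c)
    (hpq : ∀ x, p x ≤ c * q x) : KL p q ≤ (Real.log c : EReal) := by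
  have hsupp : ∀ x, q x = 0 → p x = 0 := fun x hq =>
    le_antisymm (by simpa [hq] using hpq x) (hp.1 x)
  have hterm : ∀ x, p x * Real.log (p x / q x) ≤ p x * Real.log c := by
    intro x
    rcases (hp.1 x).eq_or_lt with h | h
    · simp [← h]
    have hq : 0 < q x := pos_of_mul_pos_right (h.trans_le (hpq x)) hc.le
    refine mul_le_mul_of_nonneg_left (Real.log_le_log (by positivity) ?_) h.le
    rw [div_le_iff₀ hq]
    exact hpq x
  rw [KL, if_pos hsupp, EReal.coe_le_coe_iff]
  calc ∑ x, p x * Real.log (p x / q x) ≤ ∑ x, p x * Real.log c := sum_le_sum fun x _ => hterm x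
    _ = Real.log c := by rw [← sum_mul, hp.2, one_mul]

end Simplex

section Marginal

variable {ι κ : Type*} [Fintype ι]

noncomputable def marginal (f : ι → κ) (p : ι → ℝ) (k : κ) : ℝ :=
  ∑ x ∈ univ.filter (f · = k), p x

lemma marginal_mem_simplex [Fintype κ] (f : ι → κ) {p : ι → ℝ} (hp : p ∈ simplex ι) :
    marginal f p ∈ simplex κ :=
  ⟨fun _ => sum_nonneg fun x _ => hp.1 x, by rw [← hp.2]; exact sum_fiberwise _ _ _⟩

lemma le_marginal_apply (f : ι → κ) {p : ι → ℝ} (hp : ∀ x, 0 ≤ p x) (x : ι) :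
    p x ≤ marginal f p (f x) :=
  single_le_sum (fun y _ => hp y) (mem_filter.mpr ⟨mem_univ x, rfl⟩)

end Marginal

section IndepModel

variable {ι : Type*} [Fintype ι] [DecidableEq ι] {α : ι → Type*}

lemma prod_update_apply (θ : ∀ i, α i → ℝ) (i₀ : ι) (μ : α i₀ → ℝ) (x : ∀ i, α i) :
    ∏ i, Function.update θ i₀ μ i (x i) = μ (x i₀) * ∏ i ∈ univ.erase i₀, θ i (x i) := by
  rw [← mul_prod_erase univ _ (mem_univ i₀), Function.update_self]
  congr 1
  exact prod_congr rfl fun i hi => by rw [Function.update_of_ne (ne_of_mem_erase hi)]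

variable [∀ i, Fintype (α i)]

def indepModel (α : ι → Type*) [∀ i, Fintype (α i)] : Set ((∀ i, α i) → ℝ) :=
  {p | p ∈ simplex (∀ i, α i) ∧ ∃ θ : ∀ i, α i → ℝ,
    (∀ i, θ i ∈ simplex (α i)) ∧ ∀ x, p x = ∏ i, θ i (x i)}

lemma prod_mem_indepModel {θ : ∀ i, α i → ℝ} (hθ : ∀ i, θ i ∈ simplex (α i)) :
    (fun x => ∏ i, θ i (x i)) ∈ indepModel α := by
  refine ⟨⟨fun x => prod_nonneg fun i _ => (hθ i).1 (x i), ?_⟩, θ, hθ, fun _ => rfl⟩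
  rw [← Fintype.piFinset_univ, ← prod_univ_sum]
  exact prod_eq_one fun i _ => (hθ i).2

theorem divFrom_indepModel_le {p : (∀ i, α i) → ℝ} (hp : p ∈ simplex (∀ i, α i)) (i₀ : ι) :
    divFrom (indepModel α) p ≤ ((∑ i ∈ univ.erase i₀, Real.log (Fintype.card (α i)) : ℝ) : EReal) := by
  have hne : ∀ i, Nonempty (α i) := fun i =>
    have := nonempty_of_mem_simplex hp
    ⟨Classical.arbitrary (∀ i, α i) i⟩
  set θ : ∀ i, α i → ℝ :=
    Function.update (fun i _ => (Fintype.card (α i) : ℝ)⁻¹) i₀ (marginal (· i₀) p)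
  have hθ : ∀ i, θ i ∈ simplex (α i) := by
    intro i
    rcases eq_or_ne i i₀ with rfl | hi
    · simpa [θ] using marginal_mem_simplex (· i) hp
    · simpa [θ, Function.update_of_ne hi] using uniform_mem_simplex
  set N : ℝ := ∏ i ∈ univ.erase i₀, (Fintype.card (α i) : ℝ)
  have hN : 0 < N := prod_pos fun i _ => by exact_mod_cast Fintype.card_pos
  have hpq : ∀ x, p x ≤ N * ∏ i, θ i (x i) := by
    intro x
    rw [prod_update_apply, prod_inv_distrib, mul_left_comm, mul_inv_cancel₀ hN.ne', mul_one]
    exact le_marginal_apply (· i₀) hp.1 x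
  calc divFrom (indepModel α) p ≤ KL p (fun x => ∏ i, θ i (x i)) :=
        iInf₂_le _ (prod_mem_indepModel hθ)
    _ ≤ (Real.log N : EReal) := KL_le_log_of_le_mul hp hN hpq
    _ = _ := by rw [Real.log_prod fun i _ => Nat.cast_ne_zero.mpr Fintype.card_ne_zero]

end IndepModel

theorem stmt16_general {m : ℕ} (hm : 2 ≤ m) (d : Fin m → ℕ)
    (M : Set ((∀ i, Fin (d i)) → ℝ))
    (hM : M = {p | p ∈ simplex (∀ i, Fin (d i)) ∧ ∃ θ : ∀ i, Fin (d i) → ℝ,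
        (∀ i, θ i ∈ simplex (Fin (d i))) ∧ ∀ x, p x = ∏ i, θ i (x i)}) :
    (⨆ p ∈ simplex (∀ i, Fin (d i)), divFrom M p)
      ≤ (((∑ i, Real.log (d i)) - Real.log ((Finset.univ.sup d : ℕ) : ℝ) : ℝ) : EReal) := by
  obtain ⟨i₀, -, hi₀⟩ := exists_mem_eq_sup univ (univ_nonempty_iff.mpr ⟨⟨0, by omega⟩⟩) d
  have hlog : ∑ i ∈ univ.erase i₀, Real.log (Fintype.card (Fin (d i)))
      = ∑ i, Real.log (d i) - Real.log ((univ.sup d : ℕ) : ℝ) := by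
    rw [hi₀, ← add_sum_erase univ _ (mem_univ i₀)]
    simp
  subst hM
  exact iSup₂_le fun p hp => hlog ▸ divFrom_indepModel_le hp i₀

/-- the maximum divergence from the independence model of `m` discrete random
variables with state sizes `d_1,…,d_m` is at most `(Σ_i log d_i) − log(max_i d_i)`. -/
theorem stmt16 {m : ℕ} (hm : 2 ≤ m) (d : Fin m → ℕ) (hd : ∀ i, 1 ≤ d i)
    (M : Set ((∀ i, Fin (d i)) → ℝ))
    (hM : M = {p | p ∈ simplex (∀ i, Fin (d i)) ∧ ∃ θ : ∀ i, Fin (d i) → ℝ,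
        (∀ i, θ i ∈ simplex (Fin (d i))) ∧ ∀ x, p x = ∏ i, θ i (x i)}) :
    (⨆ p ∈ simplex (∀ i, Fin (d i)), divFrom M p)
      ≤ (((∑ i, Real.log (d i)) - Real.log ((Finset.univ.sup d : ℕ) : ℝ) : ℝ) : EReal) :=
  stmt16_general hm d M hM
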